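/- arXiv:1211.2460 — 2 statements merged into one kernel-verified Lean document; each statement's English description precedes it below -/
import Mathlib

section
/- Let {A_k} be a sequence of achronal boundaries whose associated past sets P_k are increasing (P_k ⊆ P_{k+1}), and let A_∞ = ∂(⋃_k P_k) be the future achronal limit. Then: (1) every limit point of any sequence a_k ∈ A_k lies in A_∞; and (2) for every a ∈ A_∞ and every inextendible future-directed timelike curve α through a, for all sufficiently large k the curve α meets A_k in a unique point a_k, the sequence {a_k} is future increasing (a_k ≤ a_{k+1} in the causal order), and a_k → a. -/
open Set Filter Topology

/-- An abstract spacetime: a topological space equipped with a chronological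
relation `ll` (`≪`), a causal relation `le` (`≤`) and a Lorentzian distance
function `d`, satisfying the standard causal-theoretic axioms. -/
structure Spacetime (M : Type*) [TopologicalSpace M] where
  ll : M → M → Prop
  le : M → M → Prop
  d : M → M → ℝ
  ll_trans : ∀ {x y z}, ll x y → ll y z → ll x z
  le_refl : ∀ x, le x x
  le_trans : ∀ {x y z}, le x y → le y z → le x z
  ll_imp_le : ∀ {x y}, ll x y → le x y
  ll_le : ∀ {x y z}, ll x y → le y z → ll x z
  le_ll : ∀ {x y z}, le x y → ll y z → ll x z
  isOpen_ll : IsOpen {p : M × M | ll p.1 p.2}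
  d_nonneg : ∀ x y, 0 ≤ d x y
  d_zero_of_not_le : ∀ {x y}, ¬ le x y → d x y = 0

variable {M : Type*} [TopologicalSpace M]

/-- Chronological future `I⁺(S)`. -/
def Spacetime.Iplus (st : Spacetime M) (S : Set M) : Set M := {y | ∃ x ∈ S, st.ll x y}
/-- Chronological past `I⁻(S)`. -/
def Spacetime.Iminus (st : Spacetime M) (S : Set M) : Set M := {y | ∃ x ∈ S, st.ll y x}
/-- Causal future `J⁺(S)`. -/
def Spacetime.Jplus (st : Spacetime M) (S : Set M) : Set M := {y | ∃ x ∈ S, st.le x y}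
/-- Causal past `J⁻(S)`. -/
def Spacetime.Jminus (st : Spacetime M) (S : Set M) : Set M := {y | ∃ x ∈ S, st.le y x}

/-- A future set: `I⁺(F) = F`. -/
def Spacetime.IsFutureSet (st : Spacetime M) (F : Set M) : Prop := st.Iplus F = F
/-- A past set: `I⁻(P) = P`. -/
def Spacetime.IsPastSet (st : Spacetime M) (P : Set M) : Prop := st.Iminus P = P

/-- An achronal boundary: a nonempty boundary of a future set or of a past set. -/
def Spacetime.IsAchronalBoundary (st : Spacetime M) (A : Set M) : Prop :=
  A.Nonempty ∧ ((∃ F, st.IsFutureSet F ∧ A = frontier F) ∨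
                (∃ P, st.IsPastSet P ∧ A = frontier P))

def Spacetime.IsAchronal (st : Spacetime M) (S : Set M) : Prop :=
  ∀ x ∈ S, ∀ y ∈ S, ¬ st.ll x y

def Spacetime.IsAcausal (st : Spacetime M) (S : Set M) : Prop :=
  ∀ x ∈ S, ∀ y ∈ S, st.le x y → x = y

/-- A (continuous) future-directed timelike curve defined on `I`. -/
def Spacetime.IsTimelikeCurveOn (st : Spacetime M) (γ : ℝ → M) (I : Set ℝ) : Prop :=
  ContinuousOn γ I ∧ ∀ s ∈ I, ∀ t ∈ I, s < t → st.ll (γ s) (γ t)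

/-- A (continuous) future-directed causal curve defined on `I`. -/
def Spacetime.IsCausalCurveOn (st : Spacetime M) (γ : ℝ → M) (I : Set ℝ) : Prop :=
  ContinuousOn γ I ∧ ∀ s ∈ I, ∀ t ∈ I, s ≤ t → st.le (γ s) (γ t)

/-- Future inextendibility of a curve parameterized towards `+∞`. -/
def FutureInext (γ : ℝ → M) : Prop := ¬ ∃ p : M, Tendsto γ atTop (𝓝 p)
/-- Past inextendibility of a curve parameterized towards `-∞`. -/
def PastInext (γ : ℝ → M) : Prop := ¬ ∃ p : M, Tendsto γ atBot (𝓝 p)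

/-- An inextendible future-directed causal curve (parameterized over all of `ℝ`). -/
def Spacetime.IsInextCausalCurve (st : Spacetime M) (γ : ℝ → M) : Prop :=
  st.IsCausalCurveOn γ Set.univ ∧ FutureInext γ ∧ PastInext γ

/-- A Cauchy surface: an achronal set met by every inextendible causal curve. -/
def Spacetime.IsCauchySurface (st : Spacetime M) (S : Set M) : Prop :=
  st.IsAchronal S ∧ ∀ γ : ℝ → M, st.IsInextCausalCurve γ → ∃ t, γ t ∈ S

/-- `S` is future causally complete: for every `p ∈ J⁺(S)` the closure in `S`
of `J⁻(p) ∩ S` is compact. -/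
def Spacetime.FutureCausallyComplete (st : Spacetime M) (S : Set M) : Prop :=
  ∀ p ∈ st.Jplus S, IsCompact (closure (st.Jminus {p} ∩ S) ∩ S)

/-- `S` is past causally complete: for every `p ∈ J⁻(S)` the closure in `S`
of `J⁺(p) ∩ S` is compact. -/
def Spacetime.PastCausallyComplete (st : Spacetime M) (S : Set M) : Prop :=
  ∀ p ∈ st.Jminus S, IsCompact (closure (st.Jplus {p} ∩ S) ∩ S)

/-- `x` is an edge point of the achronal set `S`. -/
def Spacetime.EdgePoint (st : Spacetime M) (S : Set M) (x : M) : Prop :=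
  x ∈ closure S ∧ ∀ U ∈ 𝓝 x, ∃ γ : ℝ → M,
    st.IsTimelikeCurveOn γ (Set.Icc 0 1) ∧
    (∀ t ∈ Set.Icc (0:ℝ) 1, γ t ∈ U ∧ γ t ∉ S) ∧
    st.ll (γ 0) x ∧ st.ll x (γ 1)

/-- `S` is edgeless. -/
def Spacetime.Edgeless (st : Spacetime M) (S : Set M) : Prop :=
  ∀ x, ¬ st.EdgePoint S x

/-- The past domain of dependence `D⁻(S)`: points from which every
future-inextendible causal curve meets `S`. -/
def Spacetime.PastDomain (st : Spacetime M) (S : Set M) : Set M :=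
  {p | ∀ γ : ℝ → M, st.IsCausalCurveOn γ (Set.Ici 0) → γ 0 = p → FutureInext γ →
        ∃ t ∈ Set.Ici (0:ℝ), γ t ∈ S}

/-- The past Cauchy horizon `H⁻(S) = closure D⁻(S) \ I⁺(D⁻(S))`. -/
def Spacetime.PastHorizon (st : Spacetime M) (S : Set M) : Set M :=
  {p | p ∈ closure (st.PastDomain S) ∧ ∀ q, st.ll q p → q ∉ st.PastDomain S}

/-- Lorentzian distance from the set `S` to the point `q`:  `d(S,q) = sup_{x∈S} d(x,q)`. -/
noncomputable def distFrom (d : M → M → ℝ) (S : Set M) (q : M) : ℝ :=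
  sSup ((fun x => d x q) '' S)

/-- Lorentzian distance from the point `q` to the set `C`:  `d(q,C) = sup_{y∈C} d(q,y)`. -/
noncomputable def distTo (d : M → M → ℝ) (q : M) (C : Set M) : ℝ :=
  sSup ((fun y => d q y) '' C)

/-- Lorentzian distance between the sets `A` and `B`: `sup_{a∈A,b∈B} d(a,b)`. -/
noncomputable def distBetween (d : M → M → ℝ) (A B : Set M) : ℝ :=
  sSup (Set.image2 d A B)

/-- The past sphere `S⁻_r(C) = {x : d(x,C) = r}`. -/
def pastSphere (d : M → M → ℝ) (r : ℝ) (C : Set M) : Set M := {x | distTo d x C = r}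

/-- The future sphere `S⁺_r(S) = {x : d(S,x) = r}`. -/
def futureSphere (d : M → M → ℝ) (r : ℝ) (S : Set M) : Set M := {x | distFrom d S x = r}

/-- A globally hyperbolic spacetime: the causal relation is a closed partial
order, causal diamonds are compact, the Lorentzian distance is finite-valued,
continuous, positive exactly on chronologically related pairs, satisfies the
reverse triangle inequality, and causally related points are joined by
maximal causal geodesic segments. -/
structure GloballyHyperbolic (M : Type*) [TopologicalSpace M] extends Spacetime M where
  le_antisymm : ∀ {x y}, le x y → le y x → x = y
  isClosed_le : IsClosed {p : M × M | le p.1 p.2}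
  compact_diamonds : ∀ p q : M, IsCompact {x | le p x ∧ le x q}
  d_cont : Continuous fun p : M × M => d p.1 p.2
  d_pos_iff : ∀ x y, 0 < d x y ↔ ll x y
  rev_triangle : ∀ {x y z}, le x y → le y z → d x y + d y z ≤ d x z
  max_geodesic : ∀ x y, le x y → ∃ γ : ℝ → M,
    γ 0 = x ∧ γ 1 = y ∧ ContinuousOn γ (Set.Icc 0 1) ∧
    (∀ s ∈ Set.Icc (0:ℝ) 1, ∀ t ∈ Set.Icc (0:ℝ) 1, s ≤ t → le (γ s) (γ t)) ∧
    (∀ s ∈ Set.Icc (0:ℝ) 1, ∀ t ∈ Set.Icc (0:ℝ) 1, ∀ u ∈ Set.Icc (0:ℝ) 1,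
      s ≤ t → t ≤ u → d (γ s) (γ u) = d (γ s) (γ t) + d (γ t) (γ u))

/-- A future `S`-ray: a future-inextendible causal curve from a point of `S`,
each of whose initial segments is a maximal `S`-segment (maximality being
encoded by additivity of the Lorentzian distance along the curve and by
`L(γ|[0,t]) = d(γ 0, γ t) = d(S, γ t)`). -/
def Spacetime.IsFutureSRay (st : Spacetime M) (S : Set M) (γ : ℝ → M) : Prop :=
  γ 0 ∈ S ∧ st.IsCausalCurveOn γ (Set.Ici 0) ∧ FutureInext γ ∧
  (∀ t ∈ Set.Ici (0:ℝ), st.d (γ 0) (γ t) = distFrom st.d S (γ t)) ∧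
  (∀ s ∈ Set.Ici (0:ℝ), ∀ t ∈ Set.Ici (0:ℝ), ∀ u ∈ Set.Ici (0:ℝ), s ≤ t → t ≤ u →
    st.d (γ s) (γ u) = st.d (γ s) (γ t) + st.d (γ t) (γ u))

/-- A timelike future `S`-ray. -/
def Spacetime.IsTimelikeFutureSRay (st : Spacetime M) (S : Set M) (γ : ℝ → M) : Prop :=
  st.IsFutureSRay S γ ∧
  ∀ s ∈ Set.Ici (0:ℝ), ∀ t ∈ Set.Ici (0:ℝ), s < t → st.ll (γ s) (γ t)

/-- A past timelike `S`-ray (parameterized so that `t → ∞` goes to the past). -/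
def Spacetime.IsTimelikePastSRay (st : Spacetime M) (S : Set M) (γ : ℝ → M) : Prop :=
  γ 0 ∈ S ∧ ContinuousOn γ (Set.Ici 0) ∧
  (∀ s ∈ Set.Ici (0:ℝ), ∀ t ∈ Set.Ici (0:ℝ), s < t → st.ll (γ t) (γ s)) ∧
  FutureInext γ ∧
  (∀ t ∈ Set.Ici (0:ℝ), st.d (γ t) (γ 0) = distTo st.d (γ t) S) ∧
  (∀ s ∈ Set.Ici (0:ℝ), ∀ t ∈ Set.Ici (0:ℝ), ∀ u ∈ Set.Ici (0:ℝ), s ≤ t → t ≤ u →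
    st.d (γ u) (γ s) = st.d (γ u) (γ t) + st.d (γ t) (γ s))

/-- A future-complete unit speed timelike `S`-ray `γ : [0,∞) → M`. -/
def GloballyHyperbolic.IsUnitTimelikeSRay (gh : GloballyHyperbolic M) (S : Set M)
    (γ : ℝ → M) : Prop :=
  γ 0 ∈ S ∧ ContinuousOn γ (Set.Ici 0) ∧
  (∀ s ∈ Set.Ici (0:ℝ), ∀ t ∈ Set.Ici (0:ℝ), s < t → gh.ll (γ s) (γ t)) ∧
  (∀ s ∈ Set.Ici (0:ℝ), ∀ t ∈ Set.Ici (0:ℝ), s ≤ t → gh.d (γ s) (γ t) = t - s) ∧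
  (∀ t ∈ Set.Ici (0:ℝ), distFrom gh.d S (γ t) = gh.d (γ 0) (γ t)) ∧
  FutureInext γ

/-- A timelike geodesic, encoded as a locally maximal unit-speed timelike curve. -/
def Spacetime.IsTimelikeGeodesicOn (st : Spacetime M) (γ : ℝ → M) (I : Set ℝ) : Prop :=
  ContinuousOn γ I ∧ (∀ s ∈ I, ∀ t ∈ I, s < t → st.ll (γ s) (γ t)) ∧
  ∀ t ∈ I, ∃ ε > 0, ∀ s₁ ∈ I ∩ Set.Icc (t-ε) (t+ε), ∀ s₂ ∈ I ∩ Set.Icc (t-ε) (t+ε),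
    s₁ ≤ s₂ → st.d (γ s₁) (γ s₂) = s₂ - s₁

/-- Future timelike geodesic completeness: every future-directed timelike
geodesic segment extends to infinite affine parameter. -/
def Spacetime.FutureTimelikeComplete (st : Spacetime M) : Prop :=
  ∀ (γ : ℝ → M) (a b : ℝ), a < b → st.IsTimelikeGeodesicOn γ (Set.Icc a b) →
    ∃ γ' : ℝ → M, Set.EqOn γ' γ (Set.Icc a b) ∧ st.IsTimelikeGeodesicOn γ' (Set.Ici a)

/-- Past timelike geodesic completeness. -/
def Spacetime.PastTimelikeComplete (st : Spacetime M) : Prop :=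
  ∀ (γ : ℝ → M) (a b : ℝ), a < b → st.IsTimelikeGeodesicOn γ (Set.Icc a b) →
    ∃ γ' : ℝ → M, Set.EqOn γ' γ (Set.Icc a b) ∧ st.IsTimelikeGeodesicOn γ' (Set.Iic b)

/-- A generalized past horosphere: the achronal limit of a monotonic sequence
of past spheres `S⁻_{r_k}(C_k)` with radii `r_k → ∞`. -/
def GloballyHyperbolic.IsPastHorosphere (gh : GloballyHyperbolic M) (Sinf : Set M) : Prop :=
  ∃ (C : ℕ → Set M) (r : ℕ → ℝ),
    (∀ k, gh.toSpacetime.PastCausallyComplete (C k)) ∧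
    (∀ k, 0 < r k) ∧ Tendsto r atTop atTop ∧
    (∀ k, (pastSphere gh.d (r k) (C k)).Nonempty) ∧
    (((∀ k, pastSphere gh.d (r k) (C k) ⊆
          gh.toSpacetime.Jminus (pastSphere gh.d (r (k+1)) (C (k+1)))) ∧
        Sinf = frontier (⋃ k, gh.toSpacetime.Iminus (pastSphere gh.d (r k) (C k)))) ∨
     ((∀ k, pastSphere gh.d (r (k+1)) (C (k+1)) ⊆
          gh.toSpacetime.Jminus (pastSphere gh.d (r k) (C k))) ∧
        Sinf = frontier (⋂ k, gh.toSpacetime.Jminus (pastSphere gh.d (r k) (C k)))))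

/- Past sets are open. Hence a cluster point `a` of points `a_k ∈ ∂P_k` cannot lie in `U = ⋃ P_k`:
the open set `P_j ∋ a` would contain some `a_k` with `k ≥ j`, whereas `a_k ∉ P_k ⊇ P_j`.
Along a timelike curve `α` the preimage of a past set is an open initial ray of `ℝ`, and it equals
`Iio t` exactly when `α t` lies on the boundary. For `a = α t₀ ∈ ∂U` the preimage of `U` is
`Iio t₀`, so for large `k` the preimage of `P_k` is a nonempty ray `Iio t_k`, and the `t_k`
increase to `t₀`. -/

theorem IsLowerSet.eq_Iio_csSup {α : Type*} [ConditionallyCompleteLinearOrder α]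
    [TopologicalSpace α] [OrderTopology α] [DenselyOrdered α] [NoMaxOrder α] {T : Set α}
    (hlower : IsLowerSet T) (hopen : IsOpen T) (hne : T.Nonempty) (hbdd : BddAbove T) :
    T = Iio (sSup T) := by
  ext t
  refine ⟨fun ht => ?_, fun ht => ?_⟩
  · obtain ⟨s, hts, hs⟩ := Eventually.exists_gt (hopen.mem_nhds ht)
    exact hts.trans_le (le_csSup hbdd hs)
  · obtain ⟨s, hs, hts⟩ := exists_lt_of_lt_csSup hne ht
    exact hlower hts.le hs

theorem mem_frontier_iUnion_of_mapClusterPt {X ι : Type*} [TopologicalSpace X] [Preorder ι]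
    {P : ι → Set X} (hopen : ∀ k, IsOpen (P k)) (hmono : Monotone P) {a : X} {u : ι → X}
    (hu : ∀ k, u k ∈ frontier (P k)) (ha : MapClusterPt a atTop u) :
    a ∈ frontier (⋃ k, P k) := by
  rw [(isOpen_iUnion hopen).frontier_eq]
  constructor
  · have hu' : ∀ k, u k ∈ closure (⋃ k, P k) := fun k =>
      closure_mono (subset_iUnion P k) (frontier_subset_closure (hu k))
    have hmem : closure (⋃ k, P k) ∈ map u atTop := mem_map.mpr (univ_mem' hu')
    simpa only [closure_closure] using ClusterPt.mem_closure_of_mem ha _ hmem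
  · intro haU
    obtain ⟨j, haj⟩ := mem_iUnion.mp haU
    have hfreq : ∃ᶠ k in atTop, u k ∈ P j :=
      mapClusterPt_iff_frequently.mp ha _ ((hopen j).mem_nhds haj)
    obtain ⟨k, hk, hjk⟩ := (hfreq.and_eventually (eventually_ge_atTop j)).exists
    exact ((hopen k).frontier_eq ▸ hu k).2 (hmono hjk hk)

theorem Monotone.tendsto_of_eventually_eq_Iio {T : ℕ → Set ℝ} (hmono : Monotone T) {τ : ℕ → ℝ}
    {t₀ : ℝ} (hτ : ∀ᶠ k in atTop, T k = Iio (τ k)) (hunion : ⋃ k, T k = Iio t₀) :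
    Tendsto τ atTop (𝓝 t₀) := by
  refine tendsto_order.mpr ⟨fun s hs => ?_, fun s hs => ?_⟩
  · obtain ⟨j, hj⟩ := mem_iUnion.mp (hunion ▸ hs : s ∈ ⋃ k, T k)
    filter_upwards [hτ, eventually_ge_atTop j] with k hk hjk
    exact show s ∈ Iio (τ k) from hk ▸ hmono hjk hj
  · filter_upwards [hτ] with k hk
    have : T k ⊆ Iio t₀ := hunion ▸ subset_iUnion T k
    exact (Iio_subset_Iio_iff.mp (hk ▸ this)).trans_lt hs

namespace Spacetime

variable {M : Type*} [TopologicalSpace M]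

theorem isOpen_setOf_ll_left (st : Spacetime M) (x : M) : IsOpen {y | st.ll y x} :=
  st.isOpen_ll.preimage (continuous_id.prodMk continuous_const)

theorem isOpen_setOf_ll_right (st : Spacetime M) (x : M) : IsOpen {y | st.ll x y} :=
  st.isOpen_ll.preimage (continuous_const.prodMk continuous_id)

variable {st : Spacetime M}

theorem IsTimelikeCurveOn.continuous {α : ℝ → M} (hα : st.IsTimelikeCurveOn α univ) :
    Continuous α :=
  continuousOn_univ.mp hα.1

theorem IsTimelikeCurveOn.le {α : ℝ → M} (hα : st.IsTimelikeCurveOn α univ) {s t : ℝ}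
    (hst : s ≤ t) : st.le (α s) (α t) := by
  rcases hst.eq_or_lt with rfl | hlt
  · exact st.le_refl _
  · exact st.ll_imp_le (hα.2 s trivial t trivial hlt)

namespace IsPastSet

variable {P : Set M}

theorem isOpen (hP : st.IsPastSet P) : IsOpen P := by
  have hP' : P = ⋃ x ∈ P, {y | st.ll y x} := by
    conv_lhs => rw [← hP]
    ext y
    simp [Spacetime.Iminus]
  rw [hP']
  exact isOpen_biUnion fun x _ => st.isOpen_setOf_ll_left x

theorem iUnion {ι : Type*} {P : ι → Set M} (hP : ∀ k, st.IsPastSet (P k)) :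
    st.IsPastSet (⋃ k, P k) := by
  refine Subset.antisymm ?_ fun y hy => ?_
  · rintro y ⟨x, hx, hyx⟩
    obtain ⟨k, hk⟩ := mem_iUnion.mp hx
    exact mem_iUnion.mpr ⟨k, hP k ▸ ⟨x, hk, hyx⟩⟩
  · obtain ⟨k, hk⟩ := mem_iUnion.mp hy
    obtain ⟨x, hx, hyx⟩ := (hP k).symm ▸ hk
    exact ⟨x, mem_iUnion.mpr ⟨k, hx⟩, hyx⟩

theorem mem_of_ll_of_mem_closure (hP : st.IsPastSet P) {x y : M} (hy : y ∈ closure P)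
    (hxy : st.ll x y) : x ∈ P := by
  obtain ⟨z, hyz, hz⟩ := mem_closure_iff.mp hy _ (st.isOpen_setOf_ll_right x) hxy
  exact hP ▸ ⟨z, hz, hyz⟩

theorem isLowerSet_preimage (hP : st.IsPastSet P) {α : ℝ → M}
    (hα : st.IsTimelikeCurveOn α univ) : IsLowerSet (α ⁻¹' P) := by
  intro t s hst ht
  rcases hst.eq_or_lt with rfl | hlt
  · exact ht
  · exact hP.mem_of_ll_of_mem_closure (subset_closure ht) (hα.2 s trivial t trivial hlt)

theorem mem_frontier_iff_preimage_eq_Iio (hP : st.IsPastSet P) {α : ℝ → M}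
    (hα : st.IsTimelikeCurveOn α univ) {t : ℝ} : α t ∈ frontier P ↔ α ⁻¹' P = Iio t := by
  rw [hP.isOpen.frontier_eq]
  constructor
  · rintro ⟨hcl, hnot⟩
    ext s
    refine ⟨fun hs => ?_, fun hs => hP.mem_of_ll_of_mem_closure hcl (hα.2 s trivial t trivial hs)⟩
    by_contra hts
    exact hnot (hP.isLowerSet_preimage hα (not_lt.mp hts) hs)
  · intro hpre
    have hcl : closure (Iio t) ⊆ α ⁻¹' closure P :=
      hpre ▸ hα.continuous.closure_preimage_subset P
    refine ⟨hcl (by rw [closure_Iio]; exact self_mem_Iic), fun ht => ?_⟩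
    exact lt_irrefl t (show t ∈ Iio t from hpre ▸ ht)

end IsPastSet

end Spacetime

theorem sequential_characterization_of_achronal_limits_general
    {M : Type*} [TopologicalSpace M] (st : Spacetime M)
    (P : ℕ → Set M) (hP : ∀ k, st.IsPastSet (P k))
    (hmono : ∀ k, P k ⊆ P (k+1))
    (Ainf : Set M) (hAinf : Ainf = frontier (⋃ k, P k)) :
    (∀ (a : M) (ak : ℕ → M), (∀ k, ak k ∈ frontier (P k)) →
        MapClusterPt a atTop ak → a ∈ Ainf) ∧
    (∀ a ∈ Ainf, ∀ (α : ℝ → M) (t0 : ℝ), α t0 = a →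
        st.IsTimelikeCurveOn α Set.univ → FutureInext α → PastInext α →
        ∃ (K : ℕ) (tk : ℕ → ℝ),
          (∀ k ≥ K, α (tk k) ∈ frontier (P k) ∧ ∀ t, α t ∈ frontier (P k) → t = tk k) ∧
          (∀ k ≥ K, st.le (α (tk k)) (α (tk (k+1)))) ∧
          Tendsto (fun k => α (tk k)) atTop (𝓝 a)) := by
  have hmonoP : Monotone P := monotone_nat_of_le_succ hmono
  refine ⟨fun a ak hak ha =>
    hAinf ▸ mem_frontier_iUnion_of_mapClusterPt (fun k => (hP k).isOpen) hmonoP hak ha, ?_⟩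
  rintro a ha α t0 rfl hα - -
  have hpreU : ⋃ k, α ⁻¹' P k = Iio t0 := by
    rw [← preimage_iUnion,
      ← (Spacetime.IsPastSet.iUnion hP).mem_frontier_iff_preimage_eq_Iio hα, ← hAinf]
    exact ha
  obtain ⟨K, hK⟩ := mem_iUnion.mp (hpreU ▸ (by simp : t0 - 1 ∈ Iio t0))
  have hcross : ∀ k ≥ K, α ⁻¹' P k = Iio (sSup (α ⁻¹' P k)) := fun k hk =>
    ((hP k).isLowerSet_preimage hα).eq_Iio_csSup ((hP k).isOpen.preimage hα.continuous)
      ⟨t0 - 1, hmonoP hk hK⟩ (bddAbove_Iio.mono (hpreU ▸ subset_iUnion (α ⁻¹' P ·) k))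
  refine ⟨K, fun k => sSup (α ⁻¹' P k), fun k hk => ⟨?_, fun t ht => ?_⟩, fun k hk => hα.le ?_, ?_⟩
  · exact ((hP k).mem_frontier_iff_preimage_eq_Iio hα).mpr (hcross k hk)
  · exact Iio_inj.mp ((((hP k).mem_frontier_iff_preimage_eq_Iio hα).mp ht).symm.trans (hcross k hk))
  · exact Iio_subset_Iio_iff.mp (hcross k hk ▸ hcross (k + 1) (by omega) ▸ preimage_mono (hmono k))
  · exact (hα.continuous.tendsto t0).comp <| Monotone.tendsto_of_eventually_eq_Iio
      (fun _ _ h => preimage_mono (hmonoP h)) ((eventually_ge_atTop K).mono hcross) hpreU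

/-- Sequential characterization of (future) achronal limits. -/
theorem sequential_characterization_of_achronal_limits
    {M : Type*} [TopologicalSpace M] (st : Spacetime M)
    (P : ℕ → Set M) (hP : ∀ k, st.IsPastSet (P k))
    (hne : ∀ k, (frontier (P k)).Nonempty)
    (hmono : ∀ k, P k ⊆ P (k+1))
    (Ainf : Set M) (hAinf : Ainf = frontier (⋃ k, P k)) :
    (∀ (a : M) (ak : ℕ → M), (∀ k, ak k ∈ frontier (P k)) →
        MapClusterPt a atTop ak → a ∈ Ainf) ∧
    (∀ a ∈ Ainf, ∀ (α : ℝ → M) (t0 : ℝ), α t0 = a →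
        st.IsTimelikeCurveOn α Set.univ → FutureInext α → PastInext α →
        ∃ (K : ℕ) (tk : ℕ → ℝ),
          (∀ k ≥ K, α (tk k) ∈ frontier (P k) ∧ ∀ t, α t ∈ frontier (P k) → t = tk k) ∧
          (∀ k ≥ K, st.le (α (tk k)) (α (tk (k+1)))) ∧
          Tendsto (fun k => α (tk k)) atTop (𝓝 a)) :=
  sequential_characterization_of_achronal_limits_general st P hP hmono Ainf hAinf
end

section
/- Let M be a globally hyperbolic spacetime and C ⊆ M past causally complete. Then for all r, a > 0, the past spheres satisfy the additivity S⁻_a(S⁻_r(C)) = S⁻_{r+a}(C). Consequently, for s > r > 0 with S⁻_s(C) nonempty, d(S⁻_s(C), S⁻_r(C)) = s − r. -/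
open Set Filter Topology

variable {M : Type*} [TopologicalSpace M]

/-!
For `x ∈ J⁻(C)`, past causal completeness makes the supremum `d(x,C)` a maximum `d(x,y₀)`.
The reverse triangle inequality gives `d(x,w) + d(w,C) ≤ d(x,C)` for every `w ≥ x` with
`d(w,C) > 0`, and on a maximal geodesic from `x` to `y₀` there is a point `z` with
`d(z,y₀) = r`, which then lies on `S⁻_r(C)` with `d(x,z) = d(x,C) - r`.
Hence `d(x, S⁻_r(C)) = d(x,C) - r` as soon as `d(x,C) ≥ r`, and both claims follow.
-/

lemma Real.nonempty_and_bddAbove_of_sSup_ne_zero {s : Set ℝ} (h : sSup s ≠ 0) :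
    s.Nonempty ∧ BddAbove s := by
  by_contra hs
  exact h (by rw [Real.sSup_def, dif_neg hs])

section distTo

variable {X : Type*} {d : X → X → ℝ} {C : Set X} {x y : X}

lemma distTo_eq_of_isMaxOn (hy : y ∈ C) (hmax : IsMaxOn (d x) C y) : distTo d x C = d x y :=
  IsGreatest.csSup_eq ⟨mem_image_of_mem _ hy, by
    rintro _ ⟨z, hz, rfl⟩
    exact isMaxOn_iff.mp hmax z hz⟩

lemma exists_pos_of_distTo_pos (h : 0 < distTo d x C) : ∃ y ∈ C, 0 < d x y := by
  obtain ⟨hne, -⟩ := Real.nonempty_and_bddAbove_of_sSup_ne_zero h.ne'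
  obtain ⟨_, ⟨y, hy, rfl⟩, hpos⟩ := exists_lt_of_lt_csSup hne h
  exact ⟨y, hy, hpos⟩

lemma distBetween_eq_of_forall_distTo_eq {A B : Set X} {c : ℝ} (hc : c ≠ 0) (hA : A.Nonempty)
    (h : ∀ x ∈ A, distTo d x B = c) : distBetween d A B = c := by
  have hlub : ∀ x ∈ A, IsLUB (d x '' B) c := fun x hx => by
    obtain ⟨hne, hbdd⟩ := Real.nonempty_and_bddAbove_of_sSup_ne_zero ((h x hx).trans_ne hc)
    exact h x hx ▸ isLUB_csSup hne hbdd
  obtain ⟨x₀, hx₀⟩ := hA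
  obtain ⟨_, ⟨y₀, hy₀, rfl⟩⟩ := (Real.nonempty_and_bddAbove_of_sSup_ne_zero
    ((h x₀ hx₀).trans_ne hc)).1
  refine IsLUB.csSup_eq ⟨?_, fun u hu => (hlub x₀ hx₀).2 ?_⟩ ⟨_, mem_image2_of_mem hx₀ hy₀⟩
  · rintro _ ⟨x, hx, y, hy, rfl⟩
    exact (hlub x hx).1 (mem_image_of_mem _ hy)
  · rintro _ ⟨y, hy, rfl⟩
    exact hu (mem_image2_of_mem hx₀ hy)

end distTo

namespace GloballyHyperbolic

variable (gh : GloballyHyperbolic M) {C : Set M} {x y w : M} {r : ℝ}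

lemma d_self (x : M) : gh.d x x = 0 :=
  _root_.le_antisymm (by linarith [gh.rev_triangle (gh.le_refl x) (gh.le_refl x)])
    (gh.d_nonneg x x)

variable {gh}

lemma le_of_d_pos (h : 0 < gh.d x y) : gh.le x y :=
  gh.ll_imp_le ((gh.d_pos_iff x y).1 h)

lemma exists_split_d (hxy : gh.le x y) (hr : 0 ≤ r) (hry : r ≤ gh.d x y) :
    ∃ z, gh.le x z ∧ gh.d z y = r ∧ gh.d x z + r = gh.d x y := by
  obtain ⟨γ, hγ0, hγ1, hγc, hγle, hγadd⟩ := gh.max_geodesic x y hxy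
  have h0 : (0 : ℝ) ∈ Icc (0 : ℝ) 1 := left_mem_Icc.2 zero_le_one
  have h1 : (1 : ℝ) ∈ Icc (0 : ℝ) 1 := right_mem_Icc.2 zero_le_one
  have hcont : ContinuousOn (fun t => gh.d (γ t) y) (Icc 0 1) :=
    gh.d_cont.comp_continuousOn (hγc.prodMk continuousOn_const)
  have hr' : r ∈ Icc (gh.d (γ 1) y) (gh.d (γ 0) y) := by
    rw [hγ0, hγ1, gh.d_self]
    exact ⟨hr, hry⟩
  obtain ⟨t, ht, hγt : gh.d (γ t) y = r⟩ := intermediate_value_Icc' zero_le_one hcont hr'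
  refine ⟨γ t, hγ0 ▸ hγle 0 h0 t ht ht.1, hγt, ?_⟩
  have hadd := hγadd 0 h0 t ht 1 h1 ht.1 ht.2
  rw [hγ0, hγ1] at hadd
  rw [hadd, hγt]

lemma mem_Jminus_of_distTo_pos (h : 0 < distTo gh.d x C) : x ∈ gh.Jminus C :=
  let ⟨y, hy, hxy⟩ := exists_pos_of_distTo_pos h
  ⟨y, hy, le_of_d_pos hxy⟩

lemma exists_isMaxOn_d (hC : gh.PastCausallyComplete C) (hx : x ∈ gh.Jminus C) :
    ∃ y ∈ C, IsMaxOn (gh.d x) C y := by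
  obtain ⟨y, hy, hxy⟩ := hx
  set K := closure (gh.Jplus {x} ∩ C) ∩ C
  have mem_K : ∀ z ∈ C, gh.le x z → z ∈ K := fun z hz hxz =>
    ⟨subset_closure ⟨⟨x, rfl, hxz⟩, hz⟩, hz⟩
  have hcont : ContinuousOn (gh.d x) K :=
    (gh.d_cont.comp (continuous_const.prodMk continuous_id)).continuousOn
  obtain ⟨y₀, hy₀, hmax⟩ := (hC x ⟨y, hy, hxy⟩).exists_isMaxOn ⟨y, mem_K y hy hxy⟩ hcont
  refine ⟨y₀, hy₀.2, isMaxOn_iff.2 fun z hz => ?_⟩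
  by_cases hxz : gh.le x z
  · exact isMaxOn_iff.1 hmax z (mem_K z hz hxz)
  · rw [gh.d_zero_of_not_le hxz]
    exact gh.d_nonneg x y₀

lemma d_add_distTo_le (hC : gh.PastCausallyComplete C) (hw : 0 < distTo gh.d w C)
    (hxw : gh.le x w) : gh.d x w + distTo gh.d w C ≤ distTo gh.d x C := by
  obtain ⟨y₁, hy₁, hwy₁⟩ := exists_pos_of_distTo_pos hw
  obtain ⟨y₀, hy₀, hmax⟩ :=
    exists_isMaxOn_d hC ⟨y₁, hy₁, gh.le_trans hxw (le_of_d_pos hwy₁)⟩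
  have hd_le : ∀ y ∈ C, gh.d x y ≤ gh.d x y₀ := isMaxOn_iff.1 hmax
  have hxw_le : gh.d x w ≤ gh.d x y₀ := by
    linarith [gh.rev_triangle hxw (le_of_d_pos hwy₁), hd_le y₁ hy₁]
  rw [distTo_eq_of_isMaxOn hy₀ hmax, ← le_sub_iff_add_le']
  refine Real.sSup_le ?_ (sub_nonneg.2 hxw_le)
  rintro _ ⟨y, hy, rfl⟩
  change gh.d w y ≤ _
  by_cases hwy : gh.le w y
  · linarith [gh.rev_triangle hxw hwy, hd_le y hy]
  · rw [gh.d_zero_of_not_le hwy]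
    exact sub_nonneg.2 hxw_le

lemma exists_mem_pastSphere_d_eq (hC : gh.PastCausallyComplete C) (hr : 0 < r)
    (hrx : r ≤ distTo gh.d x C) :
    ∃ z ∈ pastSphere gh.d r C, gh.d x z = distTo gh.d x C - r := by
  obtain ⟨y₀, hy₀, hmax⟩ := exists_isMaxOn_d hC (mem_Jminus_of_distTo_pos (hr.trans_le hrx))
  rw [distTo_eq_of_isMaxOn hy₀ hmax] at hrx ⊢
  obtain ⟨z, hxz, hzy₀, hsplit⟩ :=
    exists_split_d (le_of_d_pos (hr.trans_le hrx)) hr.le hrx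
  refine ⟨z, ?_, by linarith⟩
  have hzmax : IsMaxOn (gh.d z) C y₀ := isMaxOn_iff.2 fun y hy => by
    by_cases hzy : gh.le z y
    · linarith [gh.rev_triangle hxz hzy, isMaxOn_iff.1 hmax y hy]
    · rw [gh.d_zero_of_not_le hzy, hzy₀]
      exact hr.le
  exact (distTo_eq_of_isMaxOn hy₀ hzmax).trans hzy₀

lemma distTo_pastSphere (hC : gh.PastCausallyComplete C) (hr : 0 < r)
    (hrx : r ≤ distTo gh.d x C) :
    distTo gh.d x (pastSphere gh.d r C) = distTo gh.d x C - r := by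
  obtain ⟨z, hz, hxz⟩ := exists_mem_pastSphere_d_eq hC hr hrx
  rw [← hxz]
  refine distTo_eq_of_isMaxOn hz (isMaxOn_iff.2 fun w hw => ?_)
  have hw' : distTo gh.d w C = r := hw
  by_cases hxw : gh.le x w
  · linarith [d_add_distTo_le hC (hw' ▸ hr) hxw]
  · rw [gh.d_zero_of_not_le hxw, hxz]
    exact sub_nonneg.2 hrx

lemma pastSphere_pastSphere (hC : gh.PastCausallyComplete C) {a : ℝ} (hr : 0 < r)
    (ha : 0 < a) : pastSphere gh.d a (pastSphere gh.d r C) = pastSphere gh.d (r + a) C := by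
  ext x
  change distTo gh.d x (pastSphere gh.d r C) = a ↔ distTo gh.d x C = r + a
  constructor
  · intro hx
    obtain ⟨w, hw, hxw⟩ := exists_pos_of_distTo_pos (hx ▸ ha)
    have hw' : distTo gh.d w C = r := hw
    have hrx : r ≤ distTo gh.d x C := by
      linarith [d_add_distTo_le hC (hw' ▸ hr) (le_of_d_pos hxw)]
    rw [distTo_pastSphere hC hr hrx] at hx
    linarith
  · intro hx
    rw [distTo_pastSphere hC hr (by linarith), hx]
    ring

end GloballyHyperbolic

/-- Additivity of past sphere radii:
`S⁻_a(S⁻_r(C)) = S⁻_{r+a}(C)`, and `d(S⁻_s(C), S⁻_r(C)) = s − r` for `s > r`. -/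
theorem pastSphere_additivity
    {M : Type*} [TopologicalSpace M] (gh : GloballyHyperbolic M)
    (C : Set M) (hC : gh.toSpacetime.PastCausallyComplete C) :
    (∀ r a : ℝ, 0 < r → 0 < a →
      pastSphere gh.d a (pastSphere gh.d r C) = pastSphere gh.d (r + a) C) ∧
    (∀ s r : ℝ, 0 < r → r < s → (pastSphere gh.d s C).Nonempty →
      distBetween gh.d (pastSphere gh.d s C) (pastSphere gh.d r C) = s - r) := by
  refine ⟨fun r a hr ha => gh.pastSphere_pastSphere hC hr ha, fun s r hr hrs hne => ?_⟩
  refine distBetween_eq_of_forall_distTo_eq (sub_pos.2 hrs).ne' hne fun x hx => ?_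
  have hx' : distTo gh.d x C = s := hx
  rw [gh.distTo_pastSphere hC hr (hx'.symm ▸ hrs.le), hx']
end
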